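/- arXiv:2109.09029 — 2 statements merged into one kernel-verified Lean document; each statement's English description precedes it below -/
import Mathlib

section
/- Let A > 0, c > 0, τ > 0, and 0 ≤ p ≤ c. Set Q = √(4A² + p⁴π²)/(2π), σ₁² = Q + p²/2, σ₂² = Q − p²/2, U = (√(4A² + c⁴π²) + c²π)/(2A), and v = (τ²/2)·(√(4A²/π² + c⁴) + c²). Then for all (x, y) ∈ ℝ²: (1/(2π τ² σ₁ σ₂))·exp(−x²/(2τ²σ₁²) − y²/(2τ²σ₂²)) ≤ U · (1/(2πv))·exp(−(x² + y²)/(2v)). That is, the anisotropic Gaussian density with covariance τ²·diag(σ₁², σ₂²) is pointwise bounded above by U times the isotropic Gaussian density with covariance v·I. -/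
open Real

set_option maxHeartbeats 1000000

/-- Pointwise domination of the anisotropic Gaussian density with covariance
`τ² diag(σ₁², σ₂²)` by `U` times the isotropic Gaussian density with covariance `v·I`
(Appendix D, following inequality (ii)). -/
theorem anisotropic_le_isotropic (A c τ p : ℝ)
    (hA : 0 < A) (hc : 0 < c) (hτ : 0 < τ) (hp0 : 0 ≤ p) (hpc : p ≤ c)
    (Q σ₁ σ₂ U v : ℝ)
    (hQ : Q = Real.sqrt (4 * A ^ 2 + p ^ 4 * Real.pi ^ 2) / (2 * Real.pi))
    (hσ₁ : σ₁ ^ 2 = Q + p ^ 2 / 2) (hσ₁pos : 0 < σ₁)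
    (hσ₂ : σ₂ ^ 2 = Q - p ^ 2 / 2) (hσ₂pos : 0 < σ₂)
    (hU : U = (Real.sqrt (4 * A ^ 2 + c ^ 4 * Real.pi ^ 2) + c ^ 2 * Real.pi) / (2 * A))
    (hv : v = τ ^ 2 / 2 * (Real.sqrt (4 * A ^ 2 / Real.pi ^ 2 + c ^ 4) + c ^ 2)) :
    ∀ x y : ℝ,
      1 / (2 * Real.pi * τ ^ 2 * σ₁ * σ₂) *
          Real.exp (-x ^ 2 / (2 * τ ^ 2 * σ₁ ^ 2) - y ^ 2 / (2 * τ ^ 2 * σ₂ ^ 2))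
        ≤ U * (1 / (2 * Real.pi * v) * Real.exp (-(x ^ 2 + y ^ 2) / (2 * v))) := by
  intro x y
  have hπ : 0 < Real.pi := Real.pi_pos
  -- rewrite the sqrt in v
  have hsq : Real.sqrt (4 * A ^ 2 / Real.pi ^ 2 + c ^ 4)
      = Real.sqrt (4 * A ^ 2 + c ^ 4 * Real.pi ^ 2) / Real.pi := by
    have h1 : 4 * A ^ 2 / Real.pi ^ 2 + c ^ 4
        = (Real.sqrt (4 * A ^ 2 + c ^ 4 * Real.pi ^ 2) / Real.pi) ^ 2 := by
      rw [div_pow, Real.sq_sqrt (by positivity)]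
      field_simp
    rw [h1, Real.sqrt_sq (by positivity)]
  have hv' : v = τ ^ 2 * (Real.sqrt (4 * A ^ 2 + c ^ 4 * Real.pi ^ 2) / (2 * Real.pi)
      + c ^ 2 / 2) := by
    rw [hv, hsq]; field_simp
  -- Q² value
  have hQnn : 0 ≤ Q := by
    rw [hQ]; positivity
  have hQsq : Q ^ 2 = (4 * A ^ 2 + p ^ 4 * Real.pi ^ 2) / (4 * Real.pi ^ 2) := by
    rw [hQ, div_pow, Real.sq_sqrt (by positivity)]
    ring
  -- σ₁ σ₂ = A / π
  have hprod : σ₁ * σ₂ = A / Real.pi := by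
    have h2 : (σ₁ * σ₂) ^ 2 = (A / Real.pi) ^ 2 := by
      rw [mul_pow, hσ₁, hσ₂, div_pow]
      have h4 : Q ^ 2 - p ^ 4 / 4 = A ^ 2 / Real.pi ^ 2 := by
        rw [hQsq]; field_simp; ring
      linear_combination h4
    have h3 : σ₁ * σ₂ = Real.sqrt ((σ₁ * σ₂) ^ 2) :=
      (Real.sqrt_sq (by positivity)).symm
    rw [h3, h2, Real.sqrt_sq (by positivity)]
  -- v = U * τ² * A / π
  have hUv : v = U * (τ ^ 2 * A / Real.pi) := by
    rw [hv', hU]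
    field_simp
  have hvpos : 0 < v := by
    rw [hv']
    have : 0 < Real.sqrt (4 * A ^ 2 + c ^ 4 * Real.pi ^ 2) / (2 * Real.pi) + c ^ 2 / 2 := by
      positivity
    positivity
  have hUpos : 0 < U := by rw [hU]; positivity
  -- Q ≤ Q_c
  have hQle : Q ≤ Real.sqrt (4 * A ^ 2 + c ^ 4 * Real.pi ^ 2) / (2 * Real.pi) := by
    rw [hQ]
    gcongr
  -- variances dominated by v
  have hpc2 : p ^ 2 ≤ c ^ 2 := by nlinarith
  have h1v : τ ^ 2 * σ₁ ^ 2 ≤ v := by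
    rw [hσ₁, hv']
    exact mul_le_mul_of_nonneg_left (by linarith) (sq_nonneg τ)
  have h2v : τ ^ 2 * σ₂ ^ 2 ≤ v := by
    refine le_trans ?_ h1v
    have hσle : σ₂ ^ 2 ≤ σ₁ ^ 2 := by rw [hσ₁, hσ₂]; nlinarith [sq_nonneg p]
    exact mul_le_mul_of_nonneg_left hσle (sq_nonneg τ)
  -- exponent comparison
  have hexp : -x ^ 2 / (2 * τ ^ 2 * σ₁ ^ 2) - y ^ 2 / (2 * τ ^ 2 * σ₂ ^ 2)
      ≤ -(x ^ 2 + y ^ 2) / (2 * v) := by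
    have hx : x ^ 2 / (2 * v) ≤ x ^ 2 / (2 * τ ^ 2 * σ₁ ^ 2) :=
      div_le_div_of_nonneg_left (sq_nonneg x) (by positivity) (by linarith)
    have hy : y ^ 2 / (2 * v) ≤ y ^ 2 / (2 * τ ^ 2 * σ₂ ^ 2) :=
      div_le_div_of_nonneg_left (sq_nonneg y) (by positivity) (by linarith)
    have : -(x ^ 2 + y ^ 2) / (2 * v) = -(x ^ 2 / (2 * v)) - y ^ 2 / (2 * v) := by ring
    rw [this]
    have h1 : -x ^ 2 / (2 * τ ^ 2 * σ₁ ^ 2) = -(x ^ 2 / (2 * τ ^ 2 * σ₁ ^ 2)) := by ring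
    rw [h1]
    linarith
  -- prefactor equality
  have hcoef : U * (1 / (2 * Real.pi * v)) = 1 / (2 * Real.pi * τ ^ 2 * σ₁ * σ₂) := by
    have hσprod : 2 * Real.pi * τ ^ 2 * σ₁ * σ₂ = 2 * τ ^ 2 * A := by
      have : 2 * Real.pi * τ ^ 2 * σ₁ * σ₂ = 2 * Real.pi * τ ^ 2 * (σ₁ * σ₂) := by ring
      rw [this, hprod]
      field_simp
    rw [hσprod, hUv]
    field_simp
  calc 1 / (2 * Real.pi * τ ^ 2 * σ₁ * σ₂) *
          Real.exp (-x ^ 2 / (2 * τ ^ 2 * σ₁ ^ 2) - y ^ 2 / (2 * τ ^ 2 * σ₂ ^ 2))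
      ≤ 1 / (2 * Real.pi * τ ^ 2 * σ₁ * σ₂) * Real.exp (-(x ^ 2 + y ^ 2) / (2 * v)) := by
        have hnn : (0:ℝ) ≤ 1 / (2 * Real.pi * τ ^ 2 * σ₁ * σ₂) := by positivity
        exact mul_le_mul_of_nonneg_left (Real.exp_le_exp.2 hexp) hnn
    _ = U * (1 / (2 * Real.pi * v) * Real.exp (-(x ^ 2 + y ^ 2) / (2 * v))) := by
        rw [← mul_assoc, hcoef]
end

section
/- Let A > 0, c > 0, τ > 0, and 0 ≤ p ≤ c. Set Q = √(4A² + p⁴π²)/(2π), σ₁² = Q + p²/2, σ₂² = Q − p²/2, U = (√(4A² + c⁴π²) + c²π)/(2A), and w = τ²·A/(π·U) = 2τ²A²/(π·(√(4A² + c⁴π²) + c²π)). Then for all (x, y) ∈ ℝ²: (1/(2π τ² σ₁ σ₂))·exp(−x²/(2τ²σ₁²) − y²/(2τ²σ₂²)) ≥ (1/U) · (1/(2πw))·exp(−(x² + y²)/(2w)). That is, the anisotropic Gaussian density with covariance τ²·diag(σ₁², σ₂²) is pointwise bounded below by 1/U times the isotropic Gaussian density with covariance w·I. -/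
open Real

/-- Pointwise domination of `1/U` times the isotropic Gaussian density with covariance `w·I`
by the anisotropic Gaussian density with covariance `τ² diag(σ₁², σ₂²)`
(Appendix D, inequality (10)). -/
theorem anisotropic_ge_isotropic (A c τ p : ℝ)
    (hA : 0 < A) (hc : 0 < c) (hτ : 0 < τ) (hp0 : 0 ≤ p) (hpc : p ≤ c)
    (Q σ₁ σ₂ U w : ℝ)
    (hQ : Q = Real.sqrt (4 * A ^ 2 + p ^ 4 * Real.pi ^ 2) / (2 * Real.pi))
    (hσ₁ : σ₁ ^ 2 = Q + p ^ 2 / 2) (hσ₁pos : 0 < σ₁)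
    (hσ₂ : σ₂ ^ 2 = Q - p ^ 2 / 2) (hσ₂pos : 0 < σ₂)
    (hU : U = (Real.sqrt (4 * A ^ 2 + c ^ 4 * Real.pi ^ 2) + c ^ 2 * Real.pi) / (2 * A))
    (hw : w = τ ^ 2 * A / (Real.pi * U)) :
    ∀ x y : ℝ,
      1 / (2 * Real.pi * τ ^ 2 * σ₁ * σ₂) *
          Real.exp (-x ^ 2 / (2 * τ ^ 2 * σ₁ ^ 2) - y ^ 2 / (2 * τ ^ 2 * σ₂ ^ 2))
        ≥ 1 / U * (1 / (2 * Real.pi * w) * Real.exp (-(x ^ 2 + y ^ 2) / (2 * w))) := by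
  intro x y
  have hπ : (0:ℝ) < Real.pi := Real.pi_pos
  set Sp := Real.sqrt (4 * A ^ 2 + p ^ 4 * Real.pi ^ 2) with hSp
  set Sc := Real.sqrt (4 * A ^ 2 + c ^ 4 * Real.pi ^ 2) with hSc
  clear_value Sp Sc
  have hSp2 : Sp ^ 2 = 4 * A ^ 2 + p ^ 4 * Real.pi ^ 2 := by
    rw [hSp, Real.sq_sqrt]; positivity
  have hSc2 : Sc ^ 2 = 4 * A ^ 2 + c ^ 4 * Real.pi ^ 2 := by
    rw [hSc, Real.sq_sqrt]; positivity
  have hSppos : 0 < Sp := by rw [hSp]; positivity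
  have hScpos : 0 < Sc := by rw [hSc]; positivity
  have hSpge : p ^ 2 * Real.pi ≤ Sp := by
    nlinarith [sq_nonneg p, sq_nonneg (Sp - p ^ 2 * Real.pi)]
  have hScge : Sp ≤ Sc := by
    rw [hSp, hSc]
    apply Real.sqrt_le_sqrt
    nlinarith [pow_le_pow_left₀ hp0 hpc 4]
  have hUpos : 0 < U := by rw [hU]; positivity
  have hwpos : 0 < w := by rw [hw]; positivity
  -- clean algebraic identities
  have hQpi : Q * (2 * Real.pi) = Sp := by rw [hQ]; field_simp
  have hU' : U * (2 * A) = Sc + c ^ 2 * Real.pi := by rw [hU]; field_simp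
  have hw' : w * (Real.pi * U) = τ ^ 2 * A := by
    rw [hw]; field_simp
  have hσ₂' : σ₂ ^ 2 * (2 * Real.pi) = Sp - p ^ 2 * Real.pi := by
    rw [hσ₂]; linear_combination hQpi
  have hσ₁' : σ₁ ^ 2 * (2 * Real.pi) = Sp + p ^ 2 * Real.pi := by
    rw [hσ₁]; linear_combination hQpi
  -- σ₁ σ₂ = A / π
  have hprodsq : (σ₁ * σ₂) ^ 2 * Real.pi ^ 2 = A ^ 2 := by
    linear_combination (σ₂ ^ 2 * 2 * Real.pi / 4) * hσ₁'
      + ((Sp + p ^ 2 * Real.pi) / 4) * hσ₂' + (1 / 4) * hSp2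
  have hprod : σ₁ * σ₂ * Real.pi = A := by
    have h1 : 0 < σ₁ * σ₂ * Real.pi := by positivity
    have h2 : (σ₁ * σ₂ * Real.pi - A) * (σ₁ * σ₂ * Real.pi + A) = 0 := by
      linear_combination hprodsq
    rcases mul_eq_zero.mp h2 with h | h
    · linarith
    · linarith
  -- key inequality : 4A² ≤ (Sc + c²π)(Sp − p²π)
  have key : 4 * A ^ 2 ≤ (Sc + c ^ 2 * Real.pi) * (Sp - p ^ 2 * Real.pi) := by
    have h1 : (Sp + p ^ 2 * Real.pi) * (Sp - p ^ 2 * Real.pi) = 4 * A ^ 2 := by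
      linear_combination hSp2
    have h2 : Sp + p ^ 2 * Real.pi ≤ Sc + c ^ 2 * Real.pi := by
      have h3 : p ^ 2 ≤ c ^ 2 := pow_le_pow_left₀ hp0 hpc 2
      have h4 := mul_le_mul_of_nonneg_right h3 hπ.le
      linarith
    have h5 := mul_le_mul_of_nonneg_right h2 (sub_nonneg.mpr hSpge)
    linarith
  -- w ≤ τ² σ₂² ≤ τ² σ₁²
  have hden : (0:ℝ) < 4 * Real.pi * A * U := by positivity
  have hwle2 : w ≤ τ ^ 2 * σ₂ ^ 2 := by
    have h4 : w * (4 * Real.pi * A * U) = 4 * τ ^ 2 * A ^ 2 := by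
      linear_combination (4 * A) * hw'
    have h5 : (τ ^ 2 * σ₂ ^ 2) * (4 * Real.pi * A * U)
        = τ ^ 2 * ((Sp - p ^ 2 * Real.pi) * (Sc + c ^ 2 * Real.pi)) := by
      linear_combination (τ ^ 2 * 2 * A * U) * hσ₂'
        + (τ ^ 2 * (Sp - p ^ 2 * Real.pi)) * hU'
    have h6 : 4 * τ ^ 2 * A ^ 2
        ≤ τ ^ 2 * ((Sp - p ^ 2 * Real.pi) * (Sc + c ^ 2 * Real.pi)) := by
      have := mul_le_mul_of_nonneg_left key (sq_nonneg τ)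
      linarith [this]
    have h7 : w * (4 * Real.pi * A * U) ≤ (τ ^ 2 * σ₂ ^ 2) * (4 * Real.pi * A * U) := by
      rw [h4, h5]; exact h6
    exact le_of_mul_le_mul_right h7 hden
  have hwle1 : w ≤ τ ^ 2 * σ₁ ^ 2 := by
    refine hwle2.trans ?_
    have hss : σ₂ ^ 2 ≤ σ₁ ^ 2 := by rw [hσ₁, hσ₂]; linarith [sq_nonneg p]
    exact mul_le_mul_of_nonneg_left hss (sq_nonneg τ)
  -- exponent comparison
  have hτσ₁ : (0:ℝ) < 2 * τ ^ 2 * σ₁ ^ 2 := by positivity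
  have hτσ₂ : (0:ℝ) < 2 * τ ^ 2 * σ₂ ^ 2 := by positivity
  have h2w : (0:ℝ) < 2 * w := by positivity
  have hx : x ^ 2 / (2 * τ ^ 2 * σ₁ ^ 2) ≤ x ^ 2 / (2 * w) :=
    div_le_div_of_nonneg_left (sq_nonneg x) h2w (by linarith)
  have hy : y ^ 2 / (2 * τ ^ 2 * σ₂ ^ 2) ≤ y ^ 2 / (2 * w) :=
    div_le_div_of_nonneg_left (sq_nonneg y) h2w (by linarith)
  have hexp : -(x ^ 2 + y ^ 2) / (2 * w)
      ≤ -x ^ 2 / (2 * τ ^ 2 * σ₁ ^ 2) - y ^ 2 / (2 * τ ^ 2 * σ₂ ^ 2) := by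
    have e : -(x ^ 2 + y ^ 2) / (2 * w) = -(x ^ 2 / (2 * w)) - y ^ 2 / (2 * w) := by
      ring
    rw [e, neg_div]
    linarith
  -- prefactor identity
  have e1 : 2 * Real.pi * τ ^ 2 * σ₁ * σ₂ = 2 * τ ^ 2 * A := by
    linear_combination (2 * τ ^ 2) * hprod
  have e2 : U * (2 * Real.pi * w) = 2 * τ ^ 2 * A := by
    linear_combination 2 * hw'
  have hpre : 1 / U * (1 / (2 * Real.pi * w)) = 1 / (2 * Real.pi * τ ^ 2 * σ₁ * σ₂) := by
    rw [one_div_mul_one_div, e2, e1]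
  rw [ge_iff_le, ← mul_assoc, hpre]
  exact mul_le_mul_of_nonneg_left (Real.exp_le_exp.mpr hexp) (by positivity)
end
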